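/- Consider problem P4 with all parameters positive (in particular every weight w_{o_i}, w_{p_i}, w_{q_k} is positive) and suppose that for every device n the feasible point (α₁, α₂, l) satisfies the standing assumption k_n·f_n³·T > E_n^h(α₁), where E_n^h(α₁) = min(η·P·h_n·α₁·T, E_n^max). If (α₁, α₂, l) is feasible for P4 and at least one device's energy-causality constraint holds with strict inequality, then there exists another feasible point of P4 with the same (α₁, α₂) and strictly larger objective value W; consequently, at any maximizer of P4 every device's energy-causality constraint holds with equality (all devices exhaust the energy collected during the time frame). -/

import Mathlib

/-- A point of problem P4: `(α₁, α₂, l_o^loc, l_o^ap, l_o^p, l_p^loc, l_q^loc, l_q^ap)`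
with `m` collaborative clusters and `K = N − 2m` independent devices. -/
abbrev P4Point (m K : ℕ) :=
  ℝ × ℝ × (Fin m → ℝ) × (Fin m → ℝ) × (Fin m → ℝ) × (Fin m → ℝ) × (Fin K → ℝ) × (Fin K → ℝ)

/-! If device `n` has slack energy `s`, raise its local data by `ε = s / (k_n f_n² φ_n)`: this
exhausts its energy and increases `W` by `w_n ε > 0`. No other constraint is hurt: the
remaining ones either do not involve local data or bound it from below, except the AD's
computing-time constraint (7f), which survives because an AD spending at most
`E^h < k f³ T` computes fewer than `f T` cycles. -/

section SingleCoordinate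

variable {ι : Type*} [DecidableEq ι]

lemma le_add_single {l : ι → ℝ} {i : ι} {ε : ℝ} (hε : 0 ≤ ε) : l ≤ l + Pi.single i ε :=
  le_add_of_nonneg_right (Pi.single_nonneg.2 hε)

lemma forall_add_single {p : ι → ℝ → Prop} {l : ι → ℝ} {i : ι} {ε : ℝ}
    (h : ∀ j, p j (l j)) (hi : p i (l i + ε)) : ∀ j, p j ((l + Pi.single i ε : ι → ℝ) j) := by
  intro j
  rcases eq_or_ne j i with rfl | hj
  · simpa using hi
  · simpa [Pi.single_eq_of_ne hj] using h j

lemma exists_add_single_budget_eq {c u E l : ι → ℝ} {i : ι} (hc : 0 < c i)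
    (hE : ∀ j, c j * l j + u j ≤ E j) (hi : c i * l i + u i < E i) :
    ∃ ε > 0, (∀ j, c j * (l + Pi.single i ε : ι → ℝ) j + u j ≤ E j) ∧
      c i * (l i + ε) + u i = E i := by
  have hεi : c i * (l i + (E i - (c i * l i + u i)) / c i) + u i = E i := by
    field_simp
    ring
  exact ⟨_, div_pos (sub_pos.2 hi) hc,
    forall_add_single (p := fun j t => c j * t + u j ≤ E j) hE hεi.le, hεi⟩

lemma sum_mul_add_single [Fintype ι] (w l : ι → ℝ) (i : ι) (ε : ℝ) :
    ∑ j, w j * (l + Pi.single i ε : ι → ℝ) j = ∑ j, w j * l j + w i * ε := by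
  simp [mul_add, Finset.sum_add_distrib, Pi.single_apply]

end SingleCoordinate

lemma div_le_sub_div_of_energy_le {k f a b T : ℝ} (hk : 0 < k) (hf : 0 < f)
    (h : k * f ^ 2 * (a + b) ≤ k * f ^ 3 * T) : a / f ≤ T - b / f := by
  have hab : a + b ≤ f * T :=
    le_of_mul_le_mul_left (by linarith) (by positivity : 0 < k * f ^ 2)
  rw [le_sub_iff_add_le, ← add_div, div_le_iff₀ hf]
  linarith

theorem P4_maximizer_exhausts_energy_general
    (m K : ℕ)
    (w_o φ_o f_o k_o p_o R_o : Fin m → ℝ)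
    (w_p φ_p f_p k_p R_ap : Fin m → ℝ)
    (w_q φ_q f_q k_q p_q R_q : Fin K → ℝ)
    (f_ap T l_th : ℝ)
    (hw_o : ∀ i, 0 < w_o i) (hφ_o : ∀ i, 0 < φ_o i) (hf_o : ∀ i, 0 < f_o i)
    (hk_o : ∀ i, 0 < k_o i)
    (hw_p : ∀ i, 0 < w_p i) (hφ_p : ∀ i, 0 < φ_p i) (hf_p : ∀ i, 0 < f_p i)
    (hk_p : ∀ i, 0 < k_p i)
    (hw_q : ∀ k, 0 < w_q k) (hφ_q : ∀ k, 0 < φ_q k) (hf_q : ∀ k, 0 < f_q k)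
    (hk_q : ∀ k, 0 < k_q k)
    -- harvested-energy functions E_n^h(α₁) = min(η·P·h_n·α₁·T, E_n^max)
    (Eh_o : Fin m → ℝ → ℝ) (Eh_p : Fin m → ℝ → ℝ) (Eh_q : Fin K → ℝ → ℝ)
    -- energy consumed by each device at a point of P4
    (Eused_o : P4Point m K → Fin m → ℝ) (Eused_p : P4Point m K → Fin m → ℝ)
    (Eused_q : P4Point m K → Fin K → ℝ)
    (hEused_o : ∀ α₁ α₂ loLoc loAp loP lpLoc lqLoc lqAp i,
      Eused_o (α₁, α₂, loLoc, loAp, loP, lpLoc, lqLoc, lqAp) i =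
        k_o i * f_o i ^ 2 * φ_o i * loLoc i + (p_o i / R_o i) * (loAp i + loP i))
    (hEused_p : ∀ α₁ α₂ loLoc loAp loP lpLoc lqLoc lqAp i,
      Eused_p (α₁, α₂, loLoc, loAp, loP, lpLoc, lqLoc, lqAp) i =
        k_p i * f_p i ^ 2 * (φ_p i * lpLoc i + φ_o i * loP i))
    (hEused_q : ∀ α₁ α₂ loLoc loAp loP lpLoc lqLoc lqAp k,
      Eused_q (α₁, α₂, loLoc, loAp, loP, lpLoc, lqLoc, lqAp) k =
        k_q k * f_q k ^ 2 * φ_q k * lqLoc k + (p_q k / R_q k) * lqAp k)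
    -- the feasible-set predicate of P4
    (Feasible : P4Point m K → Prop)
    (hFeas : ∀ α₁ α₂ loLoc loAp loP lpLoc lqLoc lqAp,
      Feasible (α₁, α₂, loLoc, loAp, loP, lpLoc, lqLoc, lqAp) ↔
        ((∀ i, (loAp i + loP i) / R_o i ≤ α₂ * T) ∧                                  -- (7d)
         (∀ i, φ_o i * loP i / f_p i ≤ (1 - α₁ - α₂) * T - loP i / R_ap i) ∧          -- (7e)
         (∀ i, φ_p i * lpLoc i / f_p i ≤ T - φ_o i * loP i / f_p i) ∧                 -- (7f)
         (∀ k, lqAp k / R_q k ≤ α₂ * T) ∧                                             -- (7h)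
         ((∑ i, φ_o i * loAp i + ∑ k, φ_q k * lqAp k) / f_ap ≤ (1 - α₁ - α₂) * T) ∧   -- (7i)
         (∀ i, loLoc i + loAp i + loP i ≥ l_th) ∧                                     -- (7o)
         (∀ i, lpLoc i ≥ l_th) ∧                                                      -- (7p)
         (∀ k, lqLoc k + lqAp k ≥ l_th) ∧                                             -- (7q)
         ((∀ i, 0 ≤ loLoc i) ∧ (∀ i, 0 ≤ loAp i) ∧ (∀ i, 0 ≤ loP i) ∧                 -- (7r)
          (∀ i, 0 ≤ lpLoc i) ∧ (∀ k, 0 ≤ lqLoc k) ∧ (∀ k, 0 ≤ lqAp k)) ∧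
         -- energy causality
         (∀ i, Eused_o (α₁, α₂, loLoc, loAp, loP, lpLoc, lqLoc, lqAp) i ≤ Eh_o i α₁) ∧
         (∀ i, Eused_p (α₁, α₂, loLoc, loAp, loP, lpLoc, lqLoc, lqAp) i ≤ Eh_p i α₁) ∧
         (∀ k, Eused_q (α₁, α₂, loLoc, loAp, loP, lpLoc, lqLoc, lqAp) k ≤ Eh_q k α₁)))
    -- the objective of P4
    (W : P4Point m K → ℝ)
    (hW : ∀ α₁ α₂ loLoc loAp loP lpLoc lqLoc lqAp,
      W (α₁, α₂, loLoc, loAp, loP, lpLoc, lqLoc, lqAp) =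
        ∑ i, (w_o i * (loLoc i + loAp i + loP i) + w_p i * lpLoc i)
          + ∑ k, w_q k * (lqLoc k + lqAp k))
    -- a feasible point satisfying the standing assumption k_n·f_n³·T > E_n^h(α₁)
    (x : P4Point m K) (hx : Feasible x)
    (hstand_p : ∀ i, k_p i * f_p i ^ 3 * T > Eh_p i x.1) :
    -- (a) a slack energy constraint allows a strict improvement at the same (α₁, α₂)
    (((∃ i, Eused_o x i < Eh_o i x.1) ∨ (∃ i, Eused_p x i < Eh_p i x.1) ∨
        (∃ k, Eused_q x k < Eh_q k x.1)) →
      ∃ y : P4Point m K, Feasible y ∧ y.1 = x.1 ∧ y.2.1 = x.2.1 ∧ W x < W y) ∧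
    -- (b) hence at any maximizer every energy constraint is tight
    ((∀ y : P4Point m K, Feasible y → W y ≤ W x) →
      (∀ i, Eused_o x i = Eh_o i x.1) ∧ (∀ i, Eused_p x i = Eh_p i x.1) ∧
      (∀ k, Eused_q x k = Eh_q k x.1)) := by
  obtain ⟨α₁, α₂, lol, loa, lop, lpl, lql, lqa⟩ := x
  dsimp only at hstand_p ⊢
  obtain ⟨h7d, h7e, h7f, h7h, h7i, h7o, h7p, h7q, ⟨hn1, hn2, hn3, hn4, hn5, hn6⟩, hEo, hEp, hEq⟩ :=
    (hFeas ..).1 hx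
  have raise : ∀ lol' lpl' lql', lol ≤ lol' → lpl ≤ lpl' → lql ≤ lql' →
      (∀ i, φ_p i * lpl' i / f_p i ≤ T - φ_o i * lop i / f_p i) →
      (∀ i, Eused_o (α₁, α₂, lol', loa, lop, lpl', lql', lqa) i ≤ Eh_o i α₁) →
      (∀ i, Eused_p (α₁, α₂, lol', loa, lop, lpl', lql', lqa) i ≤ Eh_p i α₁) →
      (∀ k, Eused_q (α₁, α₂, lol', loa, lop, lpl', lql', lqa) k ≤ Eh_q k α₁) →
      Feasible (α₁, α₂, lol', loa, lop, lpl', lql', lqa) := by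
    intro lol' lpl' lql' ho hp hq h7f' hEo' hEp' hEq'
    exact (hFeas ..).2 ⟨h7d, h7e, h7f', h7h, h7i, fun i => by linarith [h7o i, ho i],
      fun i => (h7p i).trans (hp i), fun k => by linarith [h7q k, hq k],
      ⟨fun i => (hn1 i).trans (ho i), hn2, hn3, fun i => (hn4 i).trans (hp i),
        fun k => (hn5 k).trans (hq k), hn6⟩, hEo', hEp', hEq'⟩
  have improve : ((∃ i, Eused_o (α₁, α₂, lol, loa, lop, lpl, lql, lqa) i < Eh_o i α₁) ∨
      (∃ i, Eused_p (α₁, α₂, lol, loa, lop, lpl, lql, lqa) i < Eh_p i α₁) ∨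
      (∃ k, Eused_q (α₁, α₂, lol, loa, lop, lpl, lql, lqa) k < Eh_q k α₁)) →
      ∃ y : P4Point m K, Feasible y ∧ y.1 = α₁ ∧ y.2.1 = α₂ ∧
        W (α₁, α₂, lol, loa, lop, lpl, lql, lqa) < W y := by
    simp only [hEused_o, hEused_p, hEused_q] at raise hEo hEp hEq ⊢
    rintro (⟨i, hi⟩ | ⟨i, hi⟩ | ⟨k, hk⟩)
    · obtain ⟨ε, hε, hE, -⟩ := exists_add_single_budget_eq
        (c := fun j => k_o j * f_o j ^ 2 * φ_o j)
        (mul_pos (mul_pos (hk_o i) (pow_pos (hf_o i) 2)) (hφ_o i)) hEo hi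
      refine ⟨_, raise _ _ _ (le_add_single hε.le) le_rfl le_rfl h7f hE hEp hEq, rfl, rfl, ?_⟩
      simp only [hW, mul_add, Finset.sum_add_distrib, sum_mul_add_single]
      linarith [mul_pos (hw_o i) hε]
    · obtain ⟨ε, hε, hE, hEi⟩ := exists_add_single_budget_eq
        (c := fun j => k_p j * f_p j ^ 2 * φ_p j) (u := fun j => k_p j * f_p j ^ 2 * φ_o j * lop j)
        (E := fun j => Eh_p j α₁) (l := lpl)
        (mul_pos (mul_pos (hk_p i) (pow_pos (hf_p i) 2)) (hφ_p i))
        (fun j => by linarith [hEp j]) (by linarith)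
      have h7f_i : φ_p i * (lpl i + ε) / f_p i ≤ T - φ_o i * lop i / f_p i :=
        div_le_sub_div_of_energy_le (hk_p i) (hf_p i) (by linarith [hstand_p i])
      refine ⟨_, raise _ _ _ le_rfl (le_add_single hε.le) le_rfl
        (forall_add_single (p := fun j t => φ_p j * t / f_p j ≤ T - φ_o j * lop j / f_p j)
          h7f h7f_i) hEo (fun j => by linarith [hE j]) hEq, rfl, rfl, ?_⟩
      simp only [hW, mul_add, Finset.sum_add_distrib, sum_mul_add_single]
      linarith [mul_pos (hw_p i) hε]
    · obtain ⟨ε, hε, hE, -⟩ := exists_add_single_budget_eq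
        (c := fun j => k_q j * f_q j ^ 2 * φ_q j)
        (mul_pos (mul_pos (hk_q k) (pow_pos (hf_q k) 2)) (hφ_q k)) hEq hk
      refine ⟨_, raise _ _ _ le_rfl le_rfl (le_add_single hε.le) h7f hEo hEp hE, rfl, rfl, ?_⟩
      simp only [hW, mul_add, Finset.sum_add_distrib, sum_mul_add_single]
      linarith [mul_pos (hw_q k) hε]
  refine ⟨improve, fun hmax => ?_⟩
  have no_slack := fun h => (improve h).elim fun y ⟨hy, _, _, hlt⟩ => (hmax y hy).not_gt hlt
  simp only [imp_false, not_or, not_exists, not_lt] at no_slack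
  exact ⟨fun i => (hEo i).antisymm (no_slack.1 i), fun i => (hEp i).antisymm (no_slack.2.1 i),
    fun k => (hEq k).antisymm (no_slack.2.2 k)⟩

/-- Lemma 1 of the paper, for problem P4 with all parameters positive and harvested
energy `E_n^h(α₁) = min(η·P·h_n·α₁·T, E_n^max)`: under the standing assumption
`k_n·f_n³·T > E_n^h(α₁)` for every device, if a feasible point has at least one
slack energy-causality constraint, then there is a feasible point with the same
`(α₁, α₂)` and strictly larger objective; consequently, at any maximizer of P4
every device's energy-causality constraint holds with equality. -/
theorem P4_maximizer_exhausts_energy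
    (m K : ℕ)
    (w_o φ_o f_o k_o h_o p_o R_o Emax_o : Fin m → ℝ)
    (w_p φ_p f_p k_p h_p R_ap Emax_p : Fin m → ℝ)
    (w_q φ_q f_q k_q h_q p_q R_q Emax_q : Fin K → ℝ)
    (P f_ap η T l_th : ℝ)
    (hw_o : ∀ i, 0 < w_o i) (hφ_o : ∀ i, 0 < φ_o i) (hf_o : ∀ i, 0 < f_o i)
    (hk_o : ∀ i, 0 < k_o i) (hh_o : ∀ i, 0 < h_o i) (hp_o : ∀ i, 0 < p_o i)
    (hR_o : ∀ i, 0 < R_o i) (hEmax_o : ∀ i, 0 < Emax_o i)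
    (hw_p : ∀ i, 0 < w_p i) (hφ_p : ∀ i, 0 < φ_p i) (hf_p : ∀ i, 0 < f_p i)
    (hk_p : ∀ i, 0 < k_p i) (hh_p : ∀ i, 0 < h_p i) (hR_ap : ∀ i, 0 < R_ap i)
    (hEmax_p : ∀ i, 0 < Emax_p i)
    (hw_q : ∀ k, 0 < w_q k) (hφ_q : ∀ k, 0 < φ_q k) (hf_q : ∀ k, 0 < f_q k)
    (hk_q : ∀ k, 0 < k_q k) (hh_q : ∀ k, 0 < h_q k) (hp_q : ∀ k, 0 < p_q k)
    (hR_q : ∀ k, 0 < R_q k) (hEmax_q : ∀ k, 0 < Emax_q k)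
    (hP : 0 < P) (hf_ap : 0 < f_ap) (hη : 0 < η ∧ η < 1) (hT : 0 < T) (hlth : 0 < l_th)
    -- harvested-energy functions E_n^h(α₁) = min(η·P·h_n·α₁·T, E_n^max)
    (Eh_o : Fin m → ℝ → ℝ) (Eh_p : Fin m → ℝ → ℝ) (Eh_q : Fin K → ℝ → ℝ)
    (hEh_o : ∀ i α₁, Eh_o i α₁ = min (η * P * h_o i * α₁ * T) (Emax_o i))
    (hEh_p : ∀ i α₁, Eh_p i α₁ = min (η * P * h_p i * α₁ * T) (Emax_p i))
    (hEh_q : ∀ k α₁, Eh_q k α₁ = min (η * P * h_q k * α₁ * T) (Emax_q k))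
    -- energy consumed by each device at a point of P4
    (Eused_o : P4Point m K → Fin m → ℝ) (Eused_p : P4Point m K → Fin m → ℝ)
    (Eused_q : P4Point m K → Fin K → ℝ)
    (hEused_o : ∀ α₁ α₂ loLoc loAp loP lpLoc lqLoc lqAp i,
      Eused_o (α₁, α₂, loLoc, loAp, loP, lpLoc, lqLoc, lqAp) i =
        k_o i * f_o i ^ 2 * φ_o i * loLoc i + (p_o i / R_o i) * (loAp i + loP i))
    (hEused_p : ∀ α₁ α₂ loLoc loAp loP lpLoc lqLoc lqAp i,
      Eused_p (α₁, α₂, loLoc, loAp, loP, lpLoc, lqLoc, lqAp) i =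
        k_p i * f_p i ^ 2 * (φ_p i * lpLoc i + φ_o i * loP i))
    (hEused_q : ∀ α₁ α₂ loLoc loAp loP lpLoc lqLoc lqAp k,
      Eused_q (α₁, α₂, loLoc, loAp, loP, lpLoc, lqLoc, lqAp) k =
        k_q k * f_q k ^ 2 * φ_q k * lqLoc k + (p_q k / R_q k) * lqAp k)
    -- the feasible-set predicate of P4
    (Feasible : P4Point m K → Prop)
    (hFeas : ∀ α₁ α₂ loLoc loAp loP lpLoc lqLoc lqAp,
      Feasible (α₁, α₂, loLoc, loAp, loP, lpLoc, lqLoc, lqAp) ↔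
        ((∀ i, (loAp i + loP i) / R_o i ≤ α₂ * T) ∧                                  -- (7d)
         (∀ i, φ_o i * loP i / f_p i ≤ (1 - α₁ - α₂) * T - loP i / R_ap i) ∧          -- (7e)
         (∀ i, φ_p i * lpLoc i / f_p i ≤ T - φ_o i * loP i / f_p i) ∧                 -- (7f)
         (∀ k, lqAp k / R_q k ≤ α₂ * T) ∧                                             -- (7h)
         ((∑ i, φ_o i * loAp i + ∑ k, φ_q k * lqAp k) / f_ap ≤ (1 - α₁ - α₂) * T) ∧   -- (7i)
         (∀ i, loLoc i + loAp i + loP i ≥ l_th) ∧                                     -- (7o)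
         (∀ i, lpLoc i ≥ l_th) ∧                                                      -- (7p)
         (∀ k, lqLoc k + lqAp k ≥ l_th) ∧                                             -- (7q)
         ((∀ i, 0 ≤ loLoc i) ∧ (∀ i, 0 ≤ loAp i) ∧ (∀ i, 0 ≤ loP i) ∧                 -- (7r)
          (∀ i, 0 ≤ lpLoc i) ∧ (∀ k, 0 ≤ lqLoc k) ∧ (∀ k, 0 ≤ lqAp k)) ∧
         -- energy causality
         (∀ i, Eused_o (α₁, α₂, loLoc, loAp, loP, lpLoc, lqLoc, lqAp) i ≤ Eh_o i α₁) ∧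
         (∀ i, Eused_p (α₁, α₂, loLoc, loAp, loP, lpLoc, lqLoc, lqAp) i ≤ Eh_p i α₁) ∧
         (∀ k, Eused_q (α₁, α₂, loLoc, loAp, loP, lpLoc, lqLoc, lqAp) k ≤ Eh_q k α₁)))
    -- the objective of P4
    (W : P4Point m K → ℝ)
    (hW : ∀ α₁ α₂ loLoc loAp loP lpLoc lqLoc lqAp,
      W (α₁, α₂, loLoc, loAp, loP, lpLoc, lqLoc, lqAp) =
        ∑ i, (w_o i * (loLoc i + loAp i + loP i) + w_p i * lpLoc i)
          + ∑ k, w_q k * (lqLoc k + lqAp k))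
    -- a feasible point satisfying the standing assumption k_n·f_n³·T > E_n^h(α₁)
    (x : P4Point m K) (hx : Feasible x)
    (hstand_o : ∀ i, k_o i * f_o i ^ 3 * T > Eh_o i x.1)
    (hstand_p : ∀ i, k_p i * f_p i ^ 3 * T > Eh_p i x.1)
    (hstand_q : ∀ k, k_q k * f_q k ^ 3 * T > Eh_q k x.1) :
    -- (a) a slack energy constraint allows a strict improvement at the same (α₁, α₂)
    (((∃ i, Eused_o x i < Eh_o i x.1) ∨ (∃ i, Eused_p x i < Eh_p i x.1) ∨
        (∃ k, Eused_q x k < Eh_q k x.1)) →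
      ∃ y : P4Point m K, Feasible y ∧ y.1 = x.1 ∧ y.2.1 = x.2.1 ∧ W x < W y) ∧
    -- (b) hence at any maximizer every energy constraint is tight
    ((∀ y : P4Point m K, Feasible y → W y ≤ W x) →
      (∀ i, Eused_o x i = Eh_o i x.1) ∧ (∀ i, Eused_p x i = Eh_p i x.1) ∧
      (∀ k, Eused_q x k = Eh_q k x.1)) :=
  P4_maximizer_exhausts_energy_general m K w_o φ_o f_o k_o p_o R_o w_p φ_p f_p k_p R_ap w_q φ_q f_q
    k_q p_q R_q f_ap T l_th hw_o hφ_o hf_o hk_o hw_p hφ_p hf_p hk_p hw_q hφ_q hf_q hk_q Eh_o Eh_p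
    Eh_q Eused_o Eused_p Eused_q hEused_o hEused_p hEused_q Feasible hFeas W hW x hx hstand_p
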